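/- For the efficiency functional E₄(s;T) := ζ(1+2s) · 2(−2ζ(−2s))^{1/(2s)} Γ(1/(2s)) / (T^{1/(2s)} (2s−1) ζ(2s)), the one-sided derivative at s = 1/2⁺ satisfies (9T/π²) · dE₄/ds(1/2; T) = ln T + ln 6 + 12 ζ'(−1) + (6/π²) ζ'(2); in particular this derivative is positive if and only if T > T_* := exp(−ln 6 − 12ζ'(−1) − (6/π²)ζ'(2)). -/

import Mathlib

open Real Set Filter

/-- The Riemann zeta function restricted to real arguments
(analytic continuation, real part). -/
noncomputable def zetaR (x : ℝ) : ℝ := (riemannZeta (x : ℂ)).re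

/-- The derivative of the Riemann zeta function at real arguments (real part). -/
noncomputable def zetaR' (x : ℝ) : ℝ := (deriv riemannZeta (x : ℂ)).re

/-- `E₄(s;T) = ζ(1+2s)·2(-2ζ(-2s))^(1/(2s)) Γ(1/(2s)) / (T^(1/(2s)) (2s-1) ζ(2s))`. -/
noncomputable def E4 (s T : ℝ) : ℝ :=
  zetaR (1+2*s) * 2 * (-2 * zetaR (-2*s))^(1/(2*s)) * Real.Gamma (1/(2*s)) /
    (T^(1/(2*s)) * (2*s-1) * zetaR (2*s))

/-- `E₄` extended continuously to `s = 1/2` with value `π²/(18T)`. -/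
noncomputable def E4ext (s T : ℝ) : ℝ := if s = 1/2 then π^2/(18*T) else E4 s T

open Topology

noncomputable def Zc : ℂ → ℂ := fun w => if w = 1 then 1 else (w - 1) * riemannZeta w

lemma hasDerivAt_Zc : HasDerivAt Zc (Real.eulerMascheroniConstant : ℂ) 1 := by
  rw [hasDerivAt_iff_tendsto_slope]
  apply tendsto_riemannZeta_sub_one_div.congr'
  filter_upwards [self_mem_nhdsWithin] with w hw
  have hw' : w ≠ 1 := hw
  have hw1 : w - 1 ≠ 0 := sub_ne_zero.mpr hw'
  simp only [slope_def_field, Zc, if_neg hw', if_pos rfl, if_true]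
  field_simp

lemma hasDerivAt_zetaR (x : ℝ) (hx : (x:ℂ) ≠ 1) : HasDerivAt zetaR (zetaR' x) x :=
  (differentiableAt_riemannZeta hx).hasDerivAt.real_of_complex

lemma zetaR_two : zetaR 2 = π^2/6 := by
  rw [zetaR, show ((2:ℝ):ℂ) = 2 by norm_num, riemannZeta_two,
    show ((π:ℂ)^2/6) = ((π^2/6:ℝ):ℂ) by push_cast; ring, Complex.ofReal_re]

lemma zetaR_neg_one : zetaR (-1) = -1/12 := by
  rw [zetaR, show ((-1:ℝ):ℂ) = -((1:ℕ):ℂ) by norm_num, riemannZeta_neg_nat_eq_bernoulli' 1]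
  norm_num [bernoulli'_two]

noncomputable def Fm (T : ℝ) (s : ℝ) : ℝ :=
  zetaR (1+2*s) * 2 * Real.exp ((1/(2*s)) * Real.log (-2 * zetaR (-2*s))) * Real.Gamma (1/(2*s)) /
    (Real.exp ((1/(2*s)) * Real.log T) * (Zc ((2*s:ℝ):ℂ)).re)



theorem stmt19 (T : ℝ) (hT : 0 < T) :
    ∃ D : ℝ, HasDerivWithinAt (fun s => E4ext s T) D (Set.Ici (1/2:ℝ)) (1/2) ∧
      9*T/π^2 * D = Real.log T + Real.log 6 + 12 * zetaR' (-1) + 6/π^2 * zetaR' 2 ∧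
      (0 < D ↔ Real.exp (-Real.log 6 - 12 * zetaR' (-1) - 6/π^2 * zetaR' 2) < T) := by
  set γ := Real.eulerMascheroniConstant with hγ
  -- atoms
  have h1 : HasDerivAt (fun s : ℝ => zetaR (1+2*s)) (zetaR' 2 * 2) (1/2) := by
    have hin : HasDerivAt (fun s : ℝ => 1+2*s) 2 (1/2) := by
      simpa using ((hasDerivAt_id (1/2:ℝ)).const_mul 2).const_add 1
    have hout := hasDerivAt_zetaR 2 (by norm_num)
    rw [show (2:ℝ) = 1+2*(1/2) by norm_num] at hout
    simpa [Function.comp_def] using (hout.comp (1/2) hin).congr_deriv (by norm_num)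
  have hz : HasDerivAt (fun s : ℝ => zetaR (-2*s)) (zetaR' (-1) * (-2)) (1/2) := by
    have hin : HasDerivAt (fun s : ℝ => -2*s) (-2) (1/2) := by
      simpa using (hasDerivAt_id (1/2:ℝ)).const_mul (-2)
    have hout := hasDerivAt_zetaR (-1) (by norm_num)
    rw [show (-1:ℝ) = -2*(1/2) by norm_num] at hout
    have h' : HasDerivAt (fun s : ℝ => zetaR (-2*s)) (zetaR' (-2*(1/2)) * (-2)) (1/2) :=
      hout.comp (1/2) hin
    exact h'.congr_deriv (by norm_num)
  have h2 : HasDerivAt (fun s : ℝ => -2 * zetaR (-2*s)) (4 * zetaR' (-1)) (1/2) := by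
    simpa using (hz.const_mul (-2)).congr_deriv (by ring)
  have hval : -2 * zetaR (-2*(1/2:ℝ)) = 1/6 := by
    rw [show (-2*(1/2:ℝ)) = -1 by norm_num, zetaR_neg_one]; norm_num
  have h3 : HasDerivAt (fun s : ℝ => 1/(2*s)) (-2) (1/2) := by
    have hin : HasDerivAt (fun s : ℝ => 2*s) 2 (1/2) := by
      simpa using (hasDerivAt_id (1/2:ℝ)).const_mul 2
    simpa [one_div, Pi.inv_def] using (hin.inv (by norm_num)).congr_deriv (g' := -2) (by norm_num)
  have h4 : HasDerivAt (fun s : ℝ => Real.log (-2 * zetaR (-2*s))) (24 * zetaR' (-1)) (1/2) := by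
    have := h2.log (by rw [hval]; norm_num)
    exact this.congr_deriv (by rw [hval]; ring)
  have h5 : HasDerivAt (fun s : ℝ => (1/(2*s)) * Real.log (-2 * zetaR (-2*s)))
      (-(Real.log 6) * (-2) + 24 * zetaR' (-1)) (1/2) := by
    have := h3.mul h4
    apply this.congr_deriv
    rw [hval, show (2*(1/2:ℝ)) = 1 by norm_num, one_div, Real.log_inv]
    ring
  have h6 : HasDerivAt (fun s : ℝ => Real.exp ((1/(2*s)) * Real.log (-2 * zetaR (-2*s))))
      ((1/6) * (2*Real.log 6 + 24 * zetaR' (-1))) (1/2) := by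
    have := h5.exp
    apply this.congr_deriv
    rw [hval, show (2*(1/2:ℝ)) = 1 by norm_num, one_div (6:ℝ), Real.log_inv]
    norm_num [Real.exp_neg, Real.exp_log]
    ring
  have h7 : HasDerivAt (fun s : ℝ => Real.Gamma (1/(2*s))) (2*γ) (1/2) := by
    have hg := Real.hasDerivAt_Gamma_one
    rw [show (1:ℝ) = 1/(2*(1/2)) by norm_num] at hg
    have h' : HasDerivAt (fun s : ℝ => Real.Gamma (1/(2*s))) (-γ * (-2)) (1/2) :=
      hg.comp (h := fun s : ℝ => 1/(2*s)) (1/2) h3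
    exact h'.congr_deriv (by ring)
  have h8 : HasDerivAt (fun s : ℝ => Real.exp ((1/(2*s)) * Real.log T))
      (T * (-2 * Real.log T)) (1/2) := by
    have := (h3.mul_const (Real.log T)).exp
    apply this.congr_deriv
    norm_num [Real.exp_log hT]
  have h9 : HasDerivAt (fun s : ℝ => (Zc ((2*s:ℝ):ℂ)).re) (2*γ) (1/2) := by
    have hc : HasDerivAt (fun w : ℂ => Zc (2*w)) ((γ:ℂ)*2) ((1/2:ℝ):ℂ) := by
      have hin : HasDerivAt (fun w : ℂ => 2*w) 2 ((1/2:ℝ):ℂ) := by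
        simpa using (hasDerivAt_id ((1/2:ℝ):ℂ)).const_mul 2
      have hout := hasDerivAt_Zc
      rw [show (1:ℂ) = 2*((1/2:ℝ):ℂ) by norm_num] at hout
      exact hout.comp _ hin
    have := hc.real_of_complex
    simp only [Complex.mul_re, Complex.ofReal_re, Complex.ofReal_im] at this
    refine (this.congr_of_eventuallyEq ?_).congr_deriv (by simp [Complex.ofReal_re]; ring)
    filter_upwards with s
    norm_num
  -- assembly
  have hnum := ((h1.mul_const 2).mul h6).mul h7
  have hden := h8.mul h9
  have hZval : (Zc ((2*(1/2:ℝ):ℝ):ℂ)).re = 1 := by norm_num [Zc]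
  have hF := hnum.div hden (by simp only [Pi.mul_apply]; rw [hZval]; positivity)
  set R := Real.log T + Real.log 6 + 12 * zetaR' (-1) + 6/π^2 * zetaR' 2 with hR
  have hFm : HasDerivAt (Fm T) (π^2*R/(9*T)) (1/2) := by
    refine HasDerivAt.congr_deriv hF ?_
    simp only [Pi.mul_apply]
    rw [hZval, hval, show ((1:ℝ)+2*(1/2)) = 2 by norm_num, zetaR_two,
      show ((1:ℝ)/(2*(1/2))) = 1 by norm_num, Real.Gamma_one,
      one_div (6:ℝ), Real.log_inv, hR]
    simp only [one_mul, Real.exp_neg, Real.exp_log hT, Real.exp_log (show (0:ℝ) < 6 by norm_num)]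
    have hπ : π ≠ 0 := Real.pi_ne_zero
    field_simp
    ring
  have hπ : (0:ℝ) < π^2 := by positivity
  have hFval : Fm T (1/2) = π^2/(18*T) := by
    rw [Fm, hZval, hval, show ((1:ℝ)+2*(1/2)) = 2 by norm_num, zetaR_two,
      show ((1:ℝ)/(2*(1/2))) = 1 by norm_num, Real.Gamma_one, one_div (6:ℝ), Real.log_inv]
    simp only [one_mul, Real.exp_neg, Real.exp_log hT, Real.exp_log (show (0:ℝ) < 6 by norm_num)]
    field_simp
    ring
  have hpos : ∀ᶠ s in 𝓝 (1/2:ℝ), 0 < -2 * zetaR (-2*s) := by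
    have h : Filter.Tendsto (fun s:ℝ => -2 * zetaR (-2*s)) (𝓝 (1/2)) (𝓝 (1/6)) := by
      have := h2.continuousAt
      rwa [ContinuousAt, hval] at this
    exact h.eventually (eventually_gt_nhds (by norm_num))
  have hEq : (fun s => E4ext s T) =ᶠ[𝓝[Set.Ici (1/2:ℝ)] (1/2)] Fm T := by
    filter_upwards [eventually_nhdsWithin_of_eventually_nhds hpos] with s hs
    by_cases hs2 : s = (1/2:ℝ)
    · subst hs2
      rw [E4ext, if_pos rfl, hFval]
    · rw [E4ext, if_neg hs2, E4, Fm]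
      have h2s : (2*s : ℝ) ≠ 1 := fun h => hs2 (by linarith)
      have hZ : (Zc ((2*s:ℝ):ℂ)).re = (2*s-1) * zetaR (2*s) := by
        rw [Zc]
        simp only [if_neg (show ((2*s:ℝ):ℂ) ≠ 1 from fun h => h2s (by exact_mod_cast h))]
        rw [show ((2*s:ℝ):ℂ) - 1 = ((2*s-1:ℝ):ℂ) by push_cast; ring, Complex.re_ofReal_mul]
        rfl
      rw [hZ, Real.rpow_def_of_pos hs, Real.rpow_def_of_pos hT,
        mul_comm (Real.log (-2 * zetaR (-2*s))), mul_comm (Real.log T)]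
      ring
  refine ⟨π^2*R/(9*T), ?_, ?_, ?_⟩
  · exact (hFm.hasDerivWithinAt).congr_of_eventuallyEq hEq (by rw [E4ext, if_pos rfl, hFval])
  · rw [hR]
    field_simp
  · have hlt : Real.exp (-Real.log 6 - 12*zetaR' (-1) - 6/π^2*zetaR' 2) < T ↔ 0 < R := by
      rw [← Real.lt_log_iff_exp_lt hT, hR]
      constructor <;> intro h <;> linarith
    rw [hlt]
    constructor
    · intro h
      by_contra hc
      push_neg at hc
      have : π^2*R/(9*T) ≤ 0 := by
        apply div_nonpos_of_nonpos_of_nonneg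
        · nlinarith
        · linarith
      linarith
    · intro h
      positivity
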